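/- Let r be a nonnegative real number, and let G be a τ-critical graph with τ(G) = t and |V(G)| = n. Let λ₁ denote the largest eigenvalue of the adjacency matrix of G. Then n·(r + λ₁/2) ≤ (2t + 2r + 1)²/8. -/

import Mathlib

open SimpleGraph

variable {V : Type*}

/-- A transversal set (vertex cover): a set of vertices incident to all edges. -/
def IsTransversal (G : SimpleGraph V) (T : Finset V) : Prop :=
  ∀ ⦃u v : V⦄, G.Adj u v → u ∈ T ∨ v ∈ T

/-- The transversal number `τ(G)`: minimum cardinality of a transversal set. -/
noncomputable def tauNum (G : SimpleGraph V) [Fintype V] : ℕ :=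
  sInf {k | ∃ T : Finset V, T.card = k ∧ IsTransversal G T}

/-- `G` is τ-critical: it has no isolated vertex and deleting any edge decreases `τ`. -/
def IsTauCritical (G : SimpleGraph V) [Fintype V] : Prop :=
  (∀ v : V, ∃ u, G.Adj v u) ∧
    ∀ e ∈ G.edgeSet, tauNum (G.deleteEdges {e}) < tauNum G

/-- `mK2 m` is the disjoint union of `m` copies of `K₂`. -/
def mK2 (m : ℕ) : SimpleGraph (Fin m × Fin 2) where
  Adj x y := x.1 = y.1 ∧ x.2 ≠ y.2
  symm := ⟨fun _ _ ⟨h1, h2⟩ => ⟨h1.symm, h2.symm⟩⟩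
  loopless := ⟨fun _ ⟨_, h⟩ => h rfl⟩

/-- The spectral radius `λ₁(G)`: the largest eigenvalue of the adjacency matrix of `G`. -/
noncomputable def specRad (G : SimpleGraph V) [Fintype V] [DecidableEq V]
    [DecidableRel G.Adj] : ℝ :=
  sSup (spectrum ℝ (G.adjMatrix ℝ))

/-- The signless Laplacian spectral radius `q₁(G)`: the largest eigenvalue of
`Q(G) = D(G) + A(G)`. -/
noncomputable def signlessLapSpecRad (G : SimpleGraph V) [Fintype V] [DecidableEq V]
    [DecidableRel G.Adj] : ℝ :=
  sSup (spectrum ℝ (Matrix.diagonal (fun v => (G.degree v : ℝ)) + G.adjMatrix ℝ))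

/-!
The heart of the proof is Hajnal's degree bound `n + d(v) ≤ 2τ + 1` for τ-critical graphs.
Write `α = n - τ` for the independence number and `B` for the vertices outside the closed
neighbourhood of `v`. Every independent `A ⊆ B` has at least `|A|` neighbours in `B`: for a
minimal violator, Hall's theorem matches its neighbourhood into `A - p`, and exchanging along this
matching enlarges an independent set supplied by criticality of a suitable edge (of size `α - 1`
inside `B`, or of size `α` in `G`) beyond what is possible. Applied to an independent set of size `α - 1` in `B`, this gives
`n - d(v) - 1 = |B| ≥ 2(α - 1)`.

By Gershgorin, `λ₁` is at most the maximum degree, hence at most `2τ + 1 - n`, and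
`n (2r + 2τ + 1 - n) ≤ (2τ + 2r + 1)² / 4` is AM-GM.
-/

open Finset

namespace SimpleGraph

variable {G : SimpleGraph V}

lemma isIndepSet_iff_forall_not_adj {s : Set V} :
    G.IsIndepSet s ↔ ∀ a ∈ s, ∀ b ∈ s, ¬ G.Adj a b :=
  ⟨fun h _ ha _ hb hab => h ha hb hab.ne hab, fun h a ha b hb _ => h a ha b hb⟩

lemma isTransversal_iff_isVertexCover {T : Finset V} :
    IsTransversal G T ↔ G.IsVertexCover (T : Set V) :=
  Iff.rfl

lemma eq_of_adj_of_isIndepSet_deleteEdges {u v a b : V} {I : Set V}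
    (hI : (G.deleteEdges {s(u, v)}).IsIndepSet I) (ha : a ∈ I) (hb : b ∈ I) (hab : G.Adj a b) :
    s(a, b) = s(u, v) := by
  by_contra hne
  exact hI ha hb hab.ne (by simp [hab, hne])

lemma isIndepSet_diff_singleton_of_isIndepSet_deleteEdges {u v : V} {I : Set V}
    (hI : (G.deleteEdges {s(u, v)}).IsIndepSet I) : G.IsIndepSet (I \ {u}) := by
  intro a ha b hb _ hab
  rcases Sym2.eq_iff.1 (eq_of_adj_of_isIndepSet_deleteEdges hI ha.1 hb.1 hab) with h | h
  exacts [ha.2 h.1, hb.2 h.2]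

section

variable [DecidableEq V]

-- Exchange each vertex of `X ∩ C` for its partner in `A - p`, then add `p`.
lemma exists_isIndepSet_card_lt_of_injOn {A C X : Finset V} {p : V} {g : V → V}
    (hA : G.IsIndepSet (A : Set V)) (hp : p ∈ A) (hX : G.IsIndepSet (X : Set V)) (hpX : p ∉ X)
    (hAX : ∀ a ∈ A, ∀ x ∈ X, G.Adj a x → x ∈ C)
    (hg : Set.InjOn g C) (hgA : ∀ c ∈ C, g c ∈ A.erase p ∧ G.Adj c (g c)) :
    ∃ Y ⊆ X ∪ A, G.IsIndepSet (Y : Set V) ∧ #X < #Y := by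
  rw [isIndepSet_iff_forall_not_adj] at hA hX
  have hPA : (X ∩ C).image g ⊆ A.erase p := fun a ha => by
    obtain ⟨c, hc, rfl⟩ := mem_image.1 ha
    exact (hgA c (mem_inter.1 hc).2).1
  have hPX : Disjoint (X \ C) ((X ∩ C).image g) := by
    refine Finset.disjoint_right.2 fun a ha haX => ?_
    obtain ⟨c, hc, rfl⟩ := mem_image.1 ha
    exact hX c (mem_inter.1 hc).1 (g c) (mem_sdiff.1 haX).1 (hgA c (mem_inter.1 hc).2).2
  have hp' : p ∉ (X \ C) ∪ (X ∩ C).image g := by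
    simp only [mem_union, not_or]
    exact ⟨fun h => hpX (mem_sdiff.1 h).1, fun h => (mem_erase.1 (hPA h)).1 rfl⟩
  have hYA : ∀ y ∈ insert p ((X \ C) ∪ (X ∩ C).image g), y ∈ A ∨ y ∈ X \ C := by
    intro y hy
    simp only [mem_insert, mem_union] at hy
    rcases hy with rfl | hy | hy
    exacts [.inl hp, .inr hy, .inl (mem_of_mem_erase (hPA hy))]
  refine ⟨insert p ((X \ C) ∪ (X ∩ C).image g), fun y hy => ?_, ?_, ?_⟩
  · rcases hYA y hy with h | h
    exacts [mem_union_right _ h, mem_union_left _ (mem_sdiff.1 h).1]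
  · rw [isIndepSet_iff_forall_not_adj]
    intro a ha b hb hab
    rcases hYA a ha with ha | ha <;> rcases hYA b hb with hb | hb
    · exact hA a ha b hb hab
    · exact (mem_sdiff.1 hb).2 (hAX a ha b (mem_sdiff.1 hb).1 hab)
    · exact (mem_sdiff.1 ha).2 (hAX b hb a (mem_sdiff.1 ha).1 hab.symm)
    · exact hX a (mem_sdiff.1 ha).1 b (mem_sdiff.1 hb).1 hab
  · rw [card_insert_of_notMem hp', card_union_of_disjoint hPX,
      card_image_of_injOn (hg.mono (by simp)), card_sdiff_add_card_inter]
    omega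

end

section

variable [DecidableRel G.Adj]

variable (G) in
def neighborsWithin (A B : Finset V) : Finset V := {b ∈ B | ∃ a ∈ A, G.Adj a b}

lemma neighborsWithin_subset {A B : Finset V} : G.neighborsWithin A B ⊆ B := filter_subset _ _

lemma disjoint_neighborsWithin {A B : Finset V} (hA : G.IsIndepSet (A : Set V)) :
    Disjoint A (G.neighborsWithin A B) := by
  refine Finset.disjoint_left.2 fun a ha hmem => ?_
  obtain ⟨b, hb, hba⟩ := (mem_filter.1 hmem).2
  exact isIndepSet_iff_forall_not_adj.1 hA b hb a ha hba

variable [DecidableEq V]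

lemma exists_injOn_of_forall_card_le_card_neighborsWithin {A C : Finset V}
    (hall : ∀ S ⊆ C, #S ≤ #(G.neighborsWithin S A)) :
    ∃ g : V → V, Set.InjOn g C ∧ ∀ c ∈ C, g c ∈ A ∧ G.Adj c (g c) := by
  obtain ⟨g₀, hg₀, hg₀A⟩ := (all_card_le_biUnion_card_iff_exists_injective
    fun c : C => A.filter (G.Adj c)).1 fun S => by
      convert hall (S.map (Function.Embedding.subtype _)) (fun c hc => by
        obtain ⟨c', -, rfl⟩ := mem_map.1 hc; exact c'.2) using 2
      · simp
      · ext a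
        simp only [neighborsWithin, mem_biUnion, mem_filter, mem_map, Subtype.exists,
          exists_and_right, Function.Embedding.subtype_apply, exists_eq_right]
        tauto
  refine ⟨fun x => if h : x ∈ C then g₀ ⟨x, h⟩ else x, fun a ha b hb hab => ?_, fun c hc => ?_⟩
  · simp only [mem_coe] at ha hb
    exact congrArg Subtype.val (hg₀ (by simpa [ha, hb] using hab))
  · simpa [hc] using hg₀A ⟨c, hc⟩

lemma exists_injOn_neighborsWithin_of_card_lt {A B : Finset V}
    (hmin : ∀ A' ⊂ A, #A' ≤ #(G.neighborsWithin A' B))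
    (hlt : #(G.neighborsWithin A B) < #A) {p : V} (hp : p ∈ A) :
    ∃ g : V → V, Set.InjOn g (G.neighborsWithin A B) ∧
      ∀ c ∈ G.neighborsWithin A B, g c ∈ A.erase p ∧ G.Adj c (g c) := by
  refine exists_injOn_of_forall_card_le_card_neighborsWithin fun S hS => ?_
  -- Hall's condition for `S` follows from the one for the part of `A - p` that `S` does not see.
  set N := G.neighborsWithin S (A.erase p) with hN_def
  have hA' : A.erase p \ N ⊂ A := sdiff_subset.trans_ssubset (erase_ssubset hp)
  have hNA : N ⊆ A.erase p := neighborsWithin_subset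
  have hsub : G.neighborsWithin (A.erase p \ N) B ⊆ G.neighborsWithin A B \ S := by
    intro c hc
    obtain ⟨hcB, a, ha, hac⟩ := mem_filter.1 hc
    obtain ⟨haA, haN⟩ := mem_sdiff.1 ha
    refine mem_sdiff.2 ⟨mem_filter.2 ⟨hcB, a, mem_of_mem_erase haA, hac⟩, fun hcS => haN ?_⟩
    exact hN_def ▸ mem_filter.2 ⟨haA, c, hcS, hac.symm⟩
  clear_value N
  have h1 := (hmin _ hA').trans (card_le_card hsub)
  have h2 := card_le_card hNA
  have h3 := card_le_card hS
  rw [card_sdiff_of_subset hS, card_sdiff_of_subset hNA, card_erase_of_mem hp] at h1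
  rw [card_erase_of_mem hp] at h2
  omega

end

section

variable [Fintype V] [DecidableEq V]

lemma isTransversal_compl_iff {S : Finset V} : IsTransversal G Sᶜ ↔ G.IsIndepSet (S : Set V) := by
  rw [isTransversal_iff_isVertexCover, coe_compl, isVertexCover_compl]

theorem tauNum_add_indepNum : tauNum G + G.indepNum = Fintype.card V := by
  obtain ⟨T, hTcard, hT⟩ : ∃ T : Finset V, #T = tauNum G ∧ IsTransversal G T :=
    Nat.sInf_mem (s := {k | ∃ T : Finset V, #T = k ∧ IsTransversal G T})
      ⟨_, univ, rfl, fun u _ _ => .inl (mem_univ u)⟩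
  obtain ⟨S, hS⟩ := G.maximumIndepSet_exists
  have hτ : tauNum G ≤ #Sᶜ := Nat.sInf_le ⟨Sᶜ, rfl, isTransversal_compl_iff.2 hS.isIndepSet⟩
  have hα : #Tᶜ ≤ G.indepNum :=
    (isTransversal_compl_iff.1 (by rwa [compl_compl])).card_le_indepNum
  rw [card_compl] at hτ hα
  have := maximumIndepSet_card_eq_indepNum S hS
  have := T.card_le_univ
  have := S.card_le_univ
  omega

theorem IsTauCritical.exists_isIndepSet_deleteEdges (hG : IsTauCritical G) {u v : V}
    (huv : G.Adj u v) :
    ∃ I : Finset V, u ∈ I ∧ v ∈ I ∧ G.indepNum < #I ∧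
      (G.deleteEdges {s(u, v)}).IsIndepSet (I : Set V) := by
  obtain ⟨I, hI⟩ := (G.deleteEdges {s(u, v)}).maximumIndepSet_exists
  have hlt : G.indepNum < #I := by
    have := hG.2 _ (G.mem_edgeSet.2 huv)
    have := tauNum_add_indepNum (G := G)
    have := tauNum_add_indepNum (G := G.deleteEdges {s(u, v)})
    have := maximumIndepSet_card_eq_indepNum I hI
    omega
  have hnot : ¬ G.IsIndepSet (I : Set V) := fun h => h.card_le_indepNum.not_gt hlt
  simp only [isIndepSet_iff_forall_not_adj, mem_coe, not_forall, not_not] at hnot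
  obtain ⟨a, ha, b, hb, hab⟩ := hnot
  rcases Sym2.eq_iff.1 (eq_of_adj_of_isIndepSet_deleteEdges hI.isIndepSet ha hb hab) with
    ⟨rfl, rfl⟩ | ⟨rfl, rfl⟩
  exacts [⟨I, ha, hb, hlt, hI.isIndepSet⟩, ⟨I, hb, ha, hlt, hI.isIndepSet⟩]

variable [DecidableRel G.Adj]

variable (G) in
def nonNeighborFinset (v : V) : Finset V := (insert v (G.neighborFinset v))ᶜ

lemma mem_nonNeighborFinset {v w : V} : w ∈ G.nonNeighborFinset v ↔ w ≠ v ∧ ¬ G.Adj v w := by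
  simp [nonNeighborFinset]

lemma card_nonNeighborFinset_add_degree (v : V) :
    #(G.nonNeighborFinset v) + G.degree v + 1 = Fintype.card V := by
  have := (insert v (G.neighborFinset v)).card_le_univ
  rw [nonNeighborFinset, card_compl]
  rw [card_insert_of_notMem (G.notMem_neighborFinset_self v), card_neighborFinset_eq_degree]
    at this ⊢
  omega

lemma card_add_one_le_indepNum {v : V} {S : Finset V} (hSv : S ⊆ G.nonNeighborFinset v)
    (hS : G.IsIndepSet (S : Set V)) : #S + 1 ≤ G.indepNum := by
  have hv : v ∉ S := fun h => (mem_nonNeighborFinset.1 (hSv h)).1 rfl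
  rw [← card_insert_of_notMem hv]
  refine IsIndepSet.card_le_indepNum ?_
  rw [coe_insert]
  have hnadj := fun w (hw : w ∈ S) => (mem_nonNeighborFinset.1 (hSv hw)).2
  exact hS.insert fun w hw _ => ⟨hnadj w hw, fun h => hnadj w hw h.symm⟩

theorem IsTauCritical.exists_isIndepSet_subset_nonNeighborFinset (hG : IsTauCritical G)
    {v y : V} (hvy : G.Adj v y) :
    ∃ D ⊆ G.nonNeighborFinset v, G.IsIndepSet (D : Set V) ∧ G.indepNum ≤ #D + 1 ∧
      ∀ d ∈ D, ¬ G.Adj y d := by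
  obtain ⟨I, hvI, hyI, hlt, hI⟩ := hG.exists_isIndepSet_deleteEdges hvy
  have hedge {a b : V} (ha : a ∈ I) (hb : b ∈ I) (hab : G.Adj a b) :
      (a = v ∧ b = y) ∨ (a = y ∧ b = v) :=
    Sym2.eq_iff.1 (eq_of_adj_of_isIndepSet_deleteEdges hI ha hb hab)
  refine ⟨(I.erase v).erase y, fun w hw => ?_, ?_, ?_, fun d hd hyd => ?_⟩
  · simp only [mem_erase] at hw
    refine mem_nonNeighborFinset.2 ⟨hw.2.1, fun hvw => ?_⟩
    rcases hedge hvI hw.2.2 hvw with h | h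
    exacts [hw.1 h.2, hvy.ne h.1]
  · refine (isIndepSet_diff_singleton_of_isIndepSet_deleteEdges hI).mono ?_
    rw [coe_erase, coe_erase]
    exact Set.sdiff_subset
  · have := card_erase_add_one (mem_erase.2 ⟨hvy.ne.symm, hyI⟩)
    have := card_erase_add_one hvI
    omega
  · simp only [mem_erase] at hd
    rcases hedge hyI hd.2.2 hyd with h | h
    exacts [hvy.ne h.1.symm, hd.2.1 h.2]

theorem IsTauCritical.card_le_card_neighborsWithin (hG : IsTauCritical G) (v : V)
    {A : Finset V} (hAv : A ⊆ G.nonNeighborFinset v) (hA : G.IsIndepSet (A : Set V)) :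
    #A ≤ #(G.neighborsWithin A (G.nonNeighborFinset v)) := by
  induction A using Finset.strongInduction with | H A ih =>
  set B := G.nonNeighborFinset v
  set C := G.neighborsWithin A B
  by_contra! hlt
  have haug : ∀ p ∈ A, ∀ X : Finset V, G.IsIndepSet (X : Set V) → p ∉ X →
      (∀ a ∈ A, ∀ x ∈ X, G.Adj a x → x ∈ C) → ∃ Y ⊆ X ∪ A, G.IsIndepSet (Y : Set V) ∧ #X < #Y := by
    intro p hp X hX hpX hAX
    have hmin : ∀ A' ⊂ A, #A' ≤ #(G.neighborsWithin A' B) := fun A' hA' =>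
      ih A' hA' (hA'.subset.trans hAv) (hA.mono (coe_subset.2 hA'.subset))
    obtain ⟨g, hg, hgA⟩ := exists_injOn_neighborsWithin_of_card_lt hmin hlt hp
    exact exists_isIndepSet_card_lt_of_injOn hA hp hX hpX hAX hg hgA
  by_cases hN : ∃ y, G.Adj v y ∧ ∃ p ∈ A, G.Adj y p
  · -- An independent set of `B` of size `α - 1` avoiding `N(y)` grows inside `B` by the exchange.
    obtain ⟨y, hvy, p, hp, hyp⟩ := hN
    obtain ⟨D, hDv, hD, hDcard, hyD⟩ := hG.exists_isIndepSet_subset_nonNeighborFinset hvy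
    obtain ⟨Y, hY, hYi, hYcard⟩ := haug p hp D hD (fun h => hyD p h hyp)
      fun a ha x hx hax => mem_filter.2 ⟨hDv hx, a, ha, hax⟩
    have := card_add_one_le_indepNum ((hY.trans (union_subset hDv hAv))) hYi
    omega
  · -- Otherwise `N(A) ⊆ B`, and `I - p`, independent of size `α`, grows beyond `α`.
    push Not at hN
    obtain ⟨p, hp⟩ := card_pos.1 (by omega : 0 < #A)
    obtain ⟨x, hpx⟩ := hG.1 p
    obtain ⟨I, hpI, -, hIcard, hI⟩ := hG.exists_isIndepSet_deleteEdges hpx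
    have hX : G.IsIndepSet ((I.erase p : Finset V) : Set V) := by
      rw [coe_erase]
      exact isIndepSet_diff_singleton_of_isIndepSet_deleteEdges hI
    obtain ⟨Y, -, hYi, hYcard⟩ := haug p hp _ hX (notMem_erase p I) fun a ha q _ haq =>
      mem_filter.2 ⟨mem_nonNeighborFinset.2 ⟨fun hqv => (mem_nonNeighborFinset.1 (hAv ha)).2
        (hqv ▸ haq.symm), fun hvq => hN q hvq a ha haq.symm⟩, a, ha, haq⟩
    have := hYi.card_le_indepNum
    have := card_erase_add_one hpI
    omega

theorem IsTauCritical.card_add_degree_le (hG : IsTauCritical G) (v : V) :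
    Fintype.card V + G.degree v ≤ 2 * tauNum G + 1 := by
  obtain ⟨y, hvy⟩ := hG.1 v
  obtain ⟨D, hDv, hD, hDcard, -⟩ := hG.exists_isIndepSet_subset_nonNeighborFinset hvy
  have hhall := hG.card_le_card_neighborsWithin v hDv hD
  have hB := card_le_card (union_subset hDv (neighborsWithin_subset (G := G) (A := D)))
  rw [card_union_of_disjoint (disjoint_neighborsWithin hD)] at hB
  have := card_nonNeighborFinset_add_degree (G := G) v
  have := tauNum_add_indepNum (G := G)
  omega

lemma exists_le_degree_of_mem_spectrum_adjMatrix {μ : ℝ} (hμ : μ ∈ spectrum ℝ (G.adjMatrix ℝ)) :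
    ∃ v, μ ≤ G.degree v := by
  rw [← Matrix.spectrum_toLin', ← Module.End.hasEigenvalue_iff_mem_spectrum] at hμ
  obtain ⟨v, hv⟩ := eigenvalue_mem_ball hμ
  have hrow : ∑ w ∈ univ.erase v, ‖G.adjMatrix ℝ v w‖ = G.degree v := by
    rw [sum_erase _ (by simp), ← card_neighborFinset_eq_degree, neighborFinset_eq_filter]
    simp [adjMatrix_apply, apply_ite, sum_boole]
  rw [Metric.mem_closedBall, hrow, adjMatrix_apply, if_neg (G.irrefl), dist_zero_right] at hv
  exact ⟨v, (le_abs_self μ).trans hv⟩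

theorem IsTauCritical.specRad_le (hG : IsTauCritical G) :
    specRad G ≤ 2 * tauNum G + 1 - Fintype.card V := by
  have hdeg (v : V) : (Fintype.card V + G.degree v : ℝ) ≤ 2 * tauNum G + 1 := by
    exact_mod_cast hG.card_add_degree_le v
  refine Real.sSup_le (fun μ hμ => ?_) ?_
  · obtain ⟨v, hv⟩ := exists_le_degree_of_mem_spectrum_adjMatrix hμ
    linarith [hdeg v]
  · rcases isEmpty_or_nonempty V with hV | ⟨⟨v⟩⟩
    · rw [Fintype.card_eq_zero, Nat.cast_zero, sub_zero]
      positivity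
    · linarith [hdeg v, (G.degree v).cast_nonneg (α := ℝ)]

end

end SimpleGraph

theorem tau_critical_card_mul_real_r_add_half_specRad_le_general (G : SimpleGraph V) [Fintype V]
    [DecidableEq V] [DecidableRel G.Adj] (t n : ℕ) (r : ℝ)
    (hcrit : IsTauCritical G) (ht : tauNum G = t) (hn : Fintype.card V = n) :
    (n : ℝ) * (r + specRad G / 2) ≤ (2 * t + 2 * r + 1) ^ 2 / 8 := by
  subst ht hn
  have hspec := mul_le_mul_of_nonneg_left hcrit.specRad_le (Nat.cast_nonneg (Fintype.card V))
  nlinarith [sq_nonneg (2 * (tauNum G : ℝ) + 2 * r + 1 - 2 * Fintype.card V)]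

/-- For a nonnegative real `r` and a τ-critical graph `G` with
`τ(G) = t` and `|V(G)| = n`, we have `n·(r + λ₁/2) ≤ (2t + 2r + 1)²/8`. -/
theorem tau_critical_card_mul_real_r_add_half_specRad_le (G : SimpleGraph V) [Fintype V]
    [DecidableEq V] [DecidableRel G.Adj] (t n : ℕ) (r : ℝ) (hr : 0 ≤ r)
    (hcrit : IsTauCritical G) (ht : tauNum G = t) (hn : Fintype.card V = n) :
    (n : ℝ) * (r + specRad G / 2) ≤ (2 * t + 2 * r + 1) ^ 2 / 8 :=
  tau_critical_card_mul_real_r_add_half_specRad_le_general G t n r hcrit ht hn
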